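/- Let X be a real Banach space with a partial order ≼ that is translation invariant, invariant under multiplication by nonnegative scalars, has norm-closed positive cone, and is regular (every ≼-increasing sequence with a ≼-upper bound is norm-convergent). Let D ⊆ X be a nonempty norm-closed inductive subset and let F : D → D be an ≼-increasing single-valued mapping (x ≼ y implies Fx ≼ Fy) such that x₀ ≼ Fx₀ for some x₀ ∈ D. Then the fixed point set F(F) = {x ∈ D : Fx = x} is a nonempty inductive subset of D, and F(F) ∩ {x : x₀ ≼ x} is also a nonempty inductive subset of D. -/

import Mathlib

/-!
Regularity makes every nonempty chain `C` that is bounded above a Cauchy net: otherwise, for some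
`ε > 0`, every element of `C` would have an `ε`-far element of `C` above it, giving an increasing
bounded sequence that does not converge. In a complete space `C` therefore converges to a point
of its closure, which is `sup C` because the order is closed. If `D` is closed, every point of a
chain in `D` with `c ≤ F c` satisfies `c ≤ F (sup C)`, so `sup C` lies in `D` and below its image;
Zorn's lemma then gives a maximal `m ≥ x₀` with `m ≤ F m`, and `F m` is another such point,
so `F m = m`. For a chain of fixed points the same argument, run in `D ∩ [sup C, ∞)`, yields a
fixed point above the chain.
-/

open Set Filter Topology

def IsRegularOrder (X : Type*) [TopologicalSpace X] [Preorder X] : Prop :=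
  ∀ x : ℕ → X, (∀ n, x n ≤ x (n + 1)) → (∃ b : X, ∀ n, x n ≤ b) →
    ∃ l : X, Tendsto x atTop (𝓝 l)

def IsInductive {X : Type*} [Preorder X] (D : Set X) : Prop :=
  ∀ C : Set X, C ⊆ D → C.Nonempty → IsChain (· ≤ ·) C → ∃ b ∈ D, ∀ c ∈ C, c ≤ b

theorem orderClosedTopology_of_isClosed_nonneg {X : Type*} [AddCommGroup X] [PartialOrder X]
    [IsOrderedAddMonoid X] [TopologicalSpace X] [IsTopologicalAddGroup X]
    (hcone : IsClosed {x : X | 0 ≤ x}) : OrderClosedTopology X where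
  isClosed_le' := by
    have : {p : X × X | p.1 ≤ p.2} = (fun p ↦ p.2 - p.1) ⁻¹' {x | 0 ≤ x} := by
      ext; simp [sub_nonneg]
    rw [this]
    exact hcone.preimage (by fun_prop)

section Chain

variable {X : Type*} [MetricSpace X] [PartialOrder X] {C : Set X}

theorem IsRegularOrder.exists_forall_ge_dist_lt (hreg : IsRegularOrder X) (hne : C.Nonempty)
    (hbdd : BddAbove C) {ε : ℝ} (hε : 0 < ε) :
    ∃ c ∈ C, ∀ c' ∈ C, c ≤ c' → dist c' c < ε := by
  by_contra! hjump
  obtain ⟨c₀, hc₀⟩ := hne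
  obtain ⟨b, hb⟩ := hbdd
  have hstep : ∀ c : C, ∃ c' : C, (c : X) ≤ c' ∧ ε ≤ dist (c' : X) c := fun c ↦
    let ⟨c', hc', h⟩ := hjump c c.2
    ⟨⟨c', hc'⟩, h⟩
  choose f hf using hstep
  set u : ℕ → X := fun n ↦ (f^[n] ⟨c₀, hc₀⟩ : C)
  have hu : ∀ n, u n ≤ u (n + 1) ∧ ε ≤ dist (u (n + 1)) (u n) := fun n ↦ by
    simp only [u, Function.iterate_succ_apply']
    exact hf _
  obtain ⟨l, hl⟩ := hreg u (fun n ↦ (hu n).1) ⟨b, fun n ↦ hb (f^[n] _).2⟩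
  obtain ⟨N, hN⟩ := Metric.cauchySeq_iff'.1 hl.cauchySeq ε hε
  exact (hN (N + 1) N.le_succ).not_ge (hu N).2

variable [OrderClosedTopology X] [CompleteSpace X]

theorem IsChain.exists_isLUB_mem_closure (hreg : IsRegularOrder X)
    (hchain : IsChain (· ≤ ·) C) (hne : C.Nonempty) (hbdd : BddAbove C) :
    ∃ l ∈ closure C, IsLUB C l := by
  have : Nonempty C := hne.to_subtype
  have : IsDirectedOrder C := hchain.directedOn.isDirectedOrder
  have hcauchy : Cauchy (map ((↑) : C → X) atTop) := by
    refine Metric.cauchy_iff.2 ⟨inferInstance, fun ε hε ↦ ?_⟩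
    obtain ⟨c, hc, hcε⟩ := hreg.exists_forall_ge_dist_lt hne hbdd (half_pos hε)
    refine ⟨((↑) : C → X) '' Ici ⟨c, hc⟩, image_mem_map (Ici_mem_atTop _), ?_⟩
    rintro _ ⟨x, hx, rfl⟩ _ ⟨y, hy, rfl⟩
    calc dist (x : X) y ≤ dist (x : X) c + dist (y : X) c := dist_triangle_right _ _ _
      _ < ε / 2 + ε / 2 := add_lt_add (hcε x x.2 hx) (hcε y y.2 hy)
      _ = ε := add_halves ε
  obtain ⟨l, hl⟩ := CompleteSpace.complete hcauchy
  refine ⟨l, mem_closure_of_tendsto hl (Eventually.of_forall fun x ↦ x.2), fun c hc ↦ ?_,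
    fun u hu ↦ le_of_tendsto' hl fun x ↦ hu x.2⟩
  exact ge_of_tendsto hl (eventually_ge_atTop (⟨c, hc⟩ : C))

end Chain

section Inductive

variable {X : Type*} [Preorder X] {D : Set X} {F : X → X}

theorem IsInductive.inter_Ici (hind : IsInductive D) (a : X) : IsInductive (D ∩ Ici a) := by
  intro C hC ⟨c, hc⟩ hchain
  obtain ⟨b, hbD, hb⟩ := hind C (hC.trans inter_subset_left) ⟨c, hc⟩ hchain
  exact ⟨b, ⟨hbD, (hC hc).2.trans (hb c hc)⟩, hb⟩

theorem Set.MapsTo.inter_Ici (hF : MapsTo F D D) (hmono : MonotoneOn F D) {a : X} (ha : a ∈ D)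
    (haF : a ≤ F a) : MapsTo F (D ∩ Ici a) (D ∩ Ici a) :=
  fun _ hx ↦ ⟨hF hx.1, haF.trans (hmono ha hx.1 hx.2)⟩

end Inductive

section FixedPoint

variable {X : Type*} [MetricSpace X] [PartialOrder X] [OrderClosedTopology X] [CompleteSpace X]
  {D : Set X} {F : X → X}

theorem IsInductive.exists_isLUB_mem_le_map (hreg : IsRegularOrder X) (hclosed : IsClosed D)
    (hind : IsInductive D) (hmono : MonotoneOn F D) {C : Set X} (hCD : C ⊆ D)
    (hne : C.Nonempty) (hchain : IsChain (· ≤ ·) C) (hCF : ∀ c ∈ C, c ≤ F c) :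
    ∃ l ∈ D, IsLUB C l ∧ l ≤ F l := by
  obtain ⟨b, -, hb⟩ := hind C hCD hne hchain
  obtain ⟨l, hl_cl, hl⟩ := hchain.exists_isLUB_mem_closure hreg hne ⟨b, hb⟩
  have hlD : l ∈ D := hclosed.closure_subset_iff.2 hCD hl_cl
  have hC_le : C ⊆ Iic (F l) := fun c hc ↦ (hCF c hc).trans (hmono (hCD hc) hlD (hl.1 hc))
  exact ⟨l, hlD, hl, isClosed_Iic.closure_subset_iff.2 hC_le hl_cl⟩

theorem IsInductive.exists_fixedPoint_ge (hreg : IsRegularOrder X) (hclosed : IsClosed D)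
    (hind : IsInductive D) (hF : MapsTo F D D) (hmono : MonotoneOn F D) {x₀ : X}
    (hx₀ : x₀ ∈ D) (h₀ : x₀ ≤ F x₀) : ∃ m ∈ D, F m = m ∧ x₀ ≤ m := by
  have hchains : ∀ C ⊆ {x ∈ D | x ≤ F x}, IsChain (· ≤ ·) C →
      ∀ c ∈ C, ∃ ub ∈ {x ∈ D | x ≤ F x}, ∀ z ∈ C, z ≤ ub := by
    intro C hC hchain c hc
    obtain ⟨l, hlD, hl, hlF⟩ := hind.exists_isLUB_mem_le_map hreg hclosed hmono
      (fun x hx ↦ (hC hx).1) ⟨c, hc⟩ hchain fun x hx ↦ (hC hx).2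
    exact ⟨l, ⟨hlD, hlF⟩, hl.1⟩
  obtain ⟨m, hx₀m, ⟨hmD, hmF⟩, hmax⟩ := zorn_le_nonempty₀ _ hchains x₀ ⟨hx₀, h₀⟩
  exact ⟨m, hmD, le_antisymm (hmax ⟨hF hmD, hmono hmD (hF hmD) hmF⟩ hmF) hmF, hx₀m⟩

theorem IsInductive.fixedPoints (hreg : IsRegularOrder X) (hclosed : IsClosed D)
    (hind : IsInductive D) (hF : MapsTo F D D) (hmono : MonotoneOn F D) :
    IsInductive {x ∈ D | F x = x} := by
  intro C hC hne hchain
  obtain ⟨l, hlD, hl, hlF⟩ := hind.exists_isLUB_mem_le_map hreg hclosed hmono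
    (fun x hx ↦ (hC hx).1) hne hchain fun x hx ↦ (hC hx).2.ge
  obtain ⟨m, ⟨hmD, hlm⟩, hm, -⟩ := (hind.inter_Ici l).exists_fixedPoint_ge hreg
    (hclosed.inter isClosed_Ici) (hF.inter_Ici hmono hlD hlF) (hmono.mono inter_subset_left)
    ⟨hlD, le_rfl⟩ hlF
  exact ⟨m, ⟨hmD, hm⟩, fun c hc ↦ (hl.1 hc).trans hlm⟩

end FixedPoint

theorem fixedPoints_nonempty_inductive_singleValued_general {X : Type*} [NormedAddCommGroup X]
    [CompleteSpace X] [PartialOrder X]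
    (hadd : ∀ x y z : X, x ≤ y → x + z ≤ y + z)
    (hcone : IsClosed {x : X | 0 ≤ x})
    (hreg : ∀ x : ℕ → X, (∀ n, x n ≤ x (n + 1)) → (∃ b : X, ∀ n, x n ≤ b) →
      ∃ l : X, Filter.Tendsto x Filter.atTop (nhds l))
    (D : Set X) (hclosed : IsClosed D)
    (hind : ∀ C : Set X, C ⊆ D → C.Nonempty → IsChain (· ≤ ·) C →
      ∃ b ∈ D, ∀ c ∈ C, c ≤ b)
    (F : X → X) (hFD : ∀ x ∈ D, F x ∈ D)
    (hmono : ∀ x ∈ D, ∀ y ∈ D, x ≤ y → F x ≤ F y)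
    (x₀ : X) (hx₀ : x₀ ∈ D) (h₀ : x₀ ≤ F x₀) :
    ({x ∈ D | F x = x}).Nonempty ∧
    (∀ C : Set X, C ⊆ {x ∈ D | F x = x} → C.Nonempty → IsChain (· ≤ ·) C →
      ∃ b ∈ {x ∈ D | F x = x}, ∀ c ∈ C, c ≤ b) ∧
    ({x ∈ D | F x = x ∧ x₀ ≤ x}).Nonempty ∧
    (∀ C : Set X, C ⊆ {x ∈ D | F x = x ∧ x₀ ≤ x} → C.Nonempty → IsChain (· ≤ ·) C →
      ∃ b ∈ {x ∈ D | F x = x ∧ x₀ ≤ x}, ∀ c ∈ C, c ≤ b) := by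
  have : IsOrderedAddMonoid X := { add_le_add_left := fun a b h c ↦ hadd a b c h }
  have := orderClosedTopology_of_isClosed_nonneg hcone
  have hind : IsInductive D := hind
  have hF : MapsTo F D D := hFD
  have hmono : MonotoneOn F D := hmono
  obtain ⟨m, hmD, hm, hx₀m⟩ := hind.exists_fixedPoint_ge hreg hclosed hF hmono hx₀ h₀
  have hfix_ge : {x ∈ D | F x = x ∧ x₀ ≤ x} = {x ∈ D ∩ Ici x₀ | F x = x} := by
    ext x
    simp only [mem_ofPred_eq, mem_inter_iff, mem_Ici]
    tauto
  refine ⟨⟨m, hmD, hm⟩, hind.fixedPoints hreg hclosed hF hmono, ⟨m, hmD, hm, hx₀m⟩, ?_⟩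
  rw [hfix_ge]
  exact (hind.inter_Ici x₀).fixedPoints hreg (hclosed.inter isClosed_Ici)
    (hF.inter_Ici hmono hx₀ h₀) (hmono.mono inter_subset_left)

/-- Fixed point theorem for increasing single-valued maps on a closed inductive subset of a
regular partially ordered Banach space: `F(F)` and `F(F) ∩ [x₀)` are nonempty inductive. -/
theorem fixedPoints_nonempty_inductive_singleValued {X : Type*} [NormedAddCommGroup X]
    [NormedSpace ℝ X] [CompleteSpace X] [PartialOrder X]
    (hadd : ∀ x y z : X, x ≤ y → x + z ≤ y + z)
    (hsmul : ∀ α : ℝ, 0 ≤ α → ∀ x y : X, x ≤ y → α • x ≤ α • y)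
    (hcone : IsClosed {x : X | 0 ≤ x})
    (hreg : ∀ x : ℕ → X, (∀ n, x n ≤ x (n + 1)) → (∃ b : X, ∀ n, x n ≤ b) →
      ∃ l : X, Filter.Tendsto x Filter.atTop (nhds l))
    (D : Set X) (hD : D.Nonempty) (hclosed : IsClosed D)
    (hind : ∀ C : Set X, C ⊆ D → C.Nonempty → IsChain (· ≤ ·) C →
      ∃ b ∈ D, ∀ c ∈ C, c ≤ b)
    (F : X → X) (hFD : ∀ x ∈ D, F x ∈ D)
    (hmono : ∀ x ∈ D, ∀ y ∈ D, x ≤ y → F x ≤ F y)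
    (x₀ : X) (hx₀ : x₀ ∈ D) (h₀ : x₀ ≤ F x₀) :
    ({x ∈ D | F x = x}).Nonempty ∧
    (∀ C : Set X, C ⊆ {x ∈ D | F x = x} → C.Nonempty → IsChain (· ≤ ·) C →
      ∃ b ∈ {x ∈ D | F x = x}, ∀ c ∈ C, c ≤ b) ∧
    ({x ∈ D | F x = x ∧ x₀ ≤ x}).Nonempty ∧
    (∀ C : Set X, C ⊆ {x ∈ D | F x = x ∧ x₀ ≤ x} → C.Nonempty → IsChain (· ≤ ·) C →
      ∃ b ∈ {x ∈ D | F x = x ∧ x₀ ≤ x}, ∀ c ∈ C, c ≤ b) :=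
  fixedPoints_nonempty_inductive_singleValued_general hadd hcone hreg D hclosed hind F hFD hmono x₀
    hx₀ h₀
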